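/- If S is a compact set in R^3 whose volume function satisfies V(r) = mu(S) + L_0 r + M r^2 + (4/3) pi r^3 for 0 <= r < R, then the distance D = dist(X,S) from a uniform point X on B(S,R)\setminus S has density f(r) = (L_0 + 2 M r + 4 pi r^2)/(L_0 R + M R^2 + (4/3) pi R^3) on [0,R). -/

import Mathlib

/-!
For `0 ≤ r < R` the shell `cthickening r S \ S` has volume `L₀ r + M r² + (4/3) π r³`, and
`P(D ≤ r)` is the ratio of the shell volumes at radii `r` and `R`, whose derivative is the stated
density. The hypothesis covers only `r < R`; it extends to `r = R` because the smaller thickenings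
exhaust `thickening R S`, which differs from `cthickening R S` by the level set
`{x | infDist x S = R}`. That level set is Lebesgue-null because it is porous: walking from one of
its points a distance `r / 2` towards an almost nearest point of `S` reaches a ball of radius
`r / 4` strictly closer to `S`, so the level set has no density points.
-/

open Real MeasureTheory Metric Set Filter Topology

section Thickening

variable {α : Type*} [PseudoMetricSpace α]

theorem mem_cthickening_iff_infDist_le {S : Set α} (hS : S.Nonempty) {δ : ℝ} (hδ : 0 ≤ δ)
    {x : α} : x ∈ cthickening δ S ↔ infDist x S ≤ δ := by
  rw [mem_cthickening_iff, infDist]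
  exact ENNReal.le_ofReal_iff_toReal_le (infEDist_ne_top hS) hδ

theorem iUnion_cthickening_eq_thickening (S : Set α) {R : ℝ} (hR : 0 < R) {u : ℕ → ℝ}
    (hu : ∀ n, u n < R) (hlim : Tendsto u atTop (𝓝 R)) :
    ⋃ n, cthickening (u n) S = thickening R S := by
  refine (iUnion_subset fun n ↦ cthickening_subset_thickening' hR (hu n) S).antisymm
    fun x hx ↦ ?_
  obtain ⟨n, hn⟩ := (((ENNReal.continuous_ofReal.tendsto R).comp hlim).eventually
    (eventually_gt_nhds (mem_thickening_iff_infEDist_lt.mp hx))).exists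
  exact mem_iUnion.mpr
    ⟨n, thickening_subset_cthickening _ S (mem_thickening_iff_infEDist_lt.mpr hn)⟩

end Thickening

section NormedSpace

variable {E : Type*} [NormedAddCommGroup E] [NormedSpace ℝ E]

theorem exists_closedBall_subset_forall_infDist_lt {S : Set E} {x : E} {r : ℝ} (hr : 0 < r)
    (hrx : r ≤ infDist x S) :
    ∃ y, closedBall y (4⁻¹ * r) ⊆ closedBall x r ∧
      ∀ z ∈ closedBall y (4⁻¹ * r), infDist z S < infDist x S := by
  have hS : S.Nonempty := nonempty_iff_ne_empty.mpr fun h ↦ by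
    rw [h, infDist_empty] at hrx; linarith
  obtain ⟨s, hsS, hxs⟩ :=
    (infDist_lt_iff hS).mp (by linarith : infDist x S < infDist x S + r / 4)
  have hd : infDist x S ≤ dist x s := infDist_le_dist_of_mem hsS
  have hxs₀ : dist x s ≠ 0 := (by linarith : 0 < dist x s).ne'
  set c := r / (2 * dist x s)
  have hc : c * dist x s = r / 2 := by simp only [c]; field_simp
  have hc₀ : 0 ≤ c := by positivity
  have hc₁ : c ≤ 1 := by rw [div_le_one (by linarith)]; linarith
  have hyx : dist (AffineMap.lineMap x s c) x = r / 2 := by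
    rw [dist_lineMap_left, Real.norm_of_nonneg hc₀, hc]
  have hys : dist (AffineMap.lineMap x s c) s = dist x s - r / 2 := by
    rw [dist_lineMap_right, Real.norm_of_nonneg (by linarith), sub_mul, hc, one_mul]
  refine ⟨AffineMap.lineMap x s c, fun z hz ↦ ?_, fun z hz ↦ ?_⟩
  · rw [mem_closedBall] at hz ⊢
    linarith [dist_triangle z (AffineMap.lineMap x s c) x]
  · rw [mem_closedBall] at hz
    linarith [infDist_le_dist_of_mem (x := z) hsS, dist_triangle z (AffineMap.lineMap x s c) s]

variable [FiniteDimensional ℝ E] [MeasurableSpace E] [BorelSpace E] (μ : Measure E)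
  [μ.IsAddHaarMeasure]

theorem addHaar_eq_zero_of_forall_exists_closedBall_disjoint {A : Set E} (hA : MeasurableSet A)
    {κ : ℝ} (hκ : 0 < κ)
    (hole : ∀ x ∈ A, ∀ᶠ r in 𝓝[>] 0,
      ∃ y, closedBall y (κ * r) ⊆ closedBall x r ∧ Disjoint A (closedBall y (κ * r))) :
    μ A = 0 := by
  by_contra hμA
  have : (ae (μ.restrict A)).NeBot :=
    ae_neBot.mpr (by simpa [Measure.restrict_eq_zero] using hμA)
  obtain ⟨x, hdensity, hxA⟩ :=
    ((Besicovitch.ae_tendsto_measure_inter_div μ A).and (ae_restrict_mem hA)).exists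
  set q := ENNReal.ofReal (κ ^ Module.finrank ℝ E)
  have hq : q ≠ 0 := by simp only [q, ne_eq, ENNReal.ofReal_eq_zero, not_le]; positivity
  have hratio :
      ∀ᶠ r in 𝓝[>] 0, μ (A ∩ closedBall x r) / μ (closedBall x r) ≤ 1 - q := by
    filter_upwards [hole x hxA, self_mem_nhdsWithin] with r ⟨y, hsub, hdisj⟩ (hr : 0 < r)
    have hball : μ (closedBall y (κ * r)) = q * μ (closedBall x r) := by
      rw [Measure.addHaar_closedBall_mul μ y hκ.le hr.le, Measure.addHaar_closedBall_center μ x]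
    have hfin : μ (closedBall x r) ≠ ⊤ := measure_closedBall_lt_top.ne
    have hsum : μ (A ∩ closedBall x r) + q * μ (closedBall x r) ≤ μ (closedBall x r) := by
      rw [← hball, ← measure_union (hdisj.mono_left inter_subset_left) measurableSet_closedBall]
      exact measure_mono (union_subset inter_subset_right hsub)
    refine ENNReal.div_le_of_le_mul ?_
    rw [ENNReal.sub_mul fun _ _ ↦ hfin, one_mul]
    exact ENNReal.le_sub_of_add_le_right (ENNReal.mul_ne_top (by simp [q]) hfin) hsum
  exact (ENNReal.sub_lt_self ENNReal.one_ne_top one_ne_zero hq).not_ge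
    (le_of_tendsto hdensity hratio)

theorem addHaar_setOf_infDist_eq (S : Set E) {R : ℝ} (hR : 0 < R) :
    μ {x | infDist x S = R} = 0 := by
  refine addHaar_eq_zero_of_forall_exists_closedBall_disjoint μ
    (isClosed_eq (continuous_infDist_pt S) continuous_const).measurableSet
    (by norm_num : (0 : ℝ) < 4⁻¹) fun x (hx : infDist x S = R) ↦ ?_
  filter_upwards [Ioc_mem_nhdsGT hR] with r ⟨hr, hrR⟩
  obtain ⟨y, hsub, hlt⟩ := exists_closedBall_subset_forall_infDist_lt hr (hx ▸ hrR)
  exact ⟨y, hsub, disjoint_right.mpr fun z hz (hzR : infDist z S = R) ↦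
    (hlt z hz).ne (hzR.trans hx.symm)⟩

theorem addHaar_cthickening_eq_addHaar_thickening (S : Set E) {R : ℝ} (hR : 0 < R) :
    μ (cthickening R S) = μ (thickening R S) := by
  refine le_antisymm ?_ (measure_mono (thickening_subset_cthickening R S))
  have hsub : cthickening R S ⊆ thickening R S ∪ {x | infDist x S = R} := fun x hx ↦ by
    by_cases hxR : x ∈ thickening R S
    · exact Or.inl hxR
    · right
      have : infEDist x S = ENNReal.ofReal R :=
        le_antisymm (mem_cthickening_iff.mp hx) (not_lt.mp hxR)
      show infDist x S = R
      rw [infDist, this, ENNReal.toReal_ofReal hR.le]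
  calc μ (cthickening R S) ≤ μ (thickening R S ∪ {x | infDist x S = R}) := measure_mono hsub
    _ ≤ μ (thickening R S) + μ {x | infDist x S = R} := measure_union_le _ _
    _ = μ (thickening R S) := by rw [addHaar_setOf_infDist_eq μ S hR, add_zero]

theorem measureReal_cthickening_of_forall_lt {S : Set E} (hS : Bornology.IsBounded S) {R : ℝ}
    (hR : 0 < R) {F : ℝ → ℝ} (hF : ContinuousWithinAt F (Iio R) R)
    (h : ∀ r, 0 ≤ r → r < R → μ.real (cthickening r S) = F r) :
    μ.real (cthickening R S) = F R := by
  obtain ⟨u, hmono, hmem, hlim⟩ := exists_seq_strictMono_tendsto' hR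
  have hμ : Tendsto (fun n ↦ μ (cthickening (u n) S)) atTop (𝓝 (μ (cthickening R S))) := by
    rw [addHaar_cthickening_eq_addHaar_thickening μ S hR,
      ← iUnion_cthickening_eq_thickening S hR (fun n ↦ (hmem n).2) hlim]
    exact tendsto_measure_iUnion_atTop fun m n hmn ↦ cthickening_mono (hmono.monotone hmn) S
  have hF' : Tendsto (fun n ↦ F (u n)) atTop (𝓝 (F R)) :=
    hF.tendsto.comp (tendsto_nhdsWithin_of_tendsto_nhds_of_eventually_within _ hlim
      (Eventually.of_forall fun n ↦ (hmem n).2))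
  refine tendsto_nhds_unique (Tendsto.congr (fun n ↦ h _ (hmem n).1.le (hmem n).2) ?_) hF'
  exact (ENNReal.tendsto_toReal hS.cthickening.measure_lt_top.ne).comp hμ

end NormedSpace

theorem measureReal_preimage_of_map_eq_uniform {Ω α : Type*} [MeasurableSpace Ω]
    [MeasurableSpace α] {P : Measure Ω} {μ : Measure α} {X : Ω → α} (hX : Measurable X)
    {D A : Set α} (hA : MeasurableSet A) (hunif : P.map X = (μ D)⁻¹ • μ.restrict D) :
    P.real (X ⁻¹' A) = μ.real (A ∩ D) / μ.real D := by
  rw [measureReal_def, ← Measure.map_apply hX hA, hunif, Measure.smul_apply, smul_eq_mul,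
    Measure.restrict_apply hA, ENNReal.toReal_mul, ENNReal.toReal_inv, div_eq_inv_mul]
  rfl

theorem integral_shell_density (a b C r : ℝ) :
    ∫ t in (0 : ℝ)..r, (a + 2 * b * t + 4 * π * t ^ 2) / C
      = (a * r + b * r ^ 2 + 4 / 3 * π * r ^ 3) / C := by
  have hderiv : ∀ t, HasDerivAt (fun t ↦ (a * t + b * t ^ 2 + 4 / 3 * π * t ^ 3) / C)
      ((a + 2 * b * t + 4 * π * t ^ 2) / C) t := fun t ↦
    ((((hasDerivAt_id' t).const_mul a).add ((hasDerivAt_pow 2 t).const_mul b)).add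
      ((hasDerivAt_pow 3 t).const_mul (4 / 3 * π))).div_const C |>.congr_deriv (by push_cast; ring)
  rw [intervalIntegral.integral_eq_sub_of_hasDerivAt (fun t _ ↦ hderiv t)
    (Continuous.intervalIntegrable (by fun_prop) _ _)]
  simp

theorem stmt_9_general (S : Set (EuclideanSpace ℝ (Fin 3)))
    (hS : IsCompact S) (hSne : S.Nonempty) (R L0 M : ℝ)
    (hvol : ∀ r : ℝ, 0 ≤ r → r < R →
      (volume (cthickening r S)).toReal
        = (volume S).toReal + L0 * r + M * r ^ 2 + 4 / 3 * π * r ^ 3)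
    {Ω : Type*} [MeasurableSpace Ω] (P : Measure Ω)
    (X : Ω → EuclideanSpace ℝ (Fin 3)) (hX : Measurable X)
    (hunif : Measure.map X P
      = (volume (cthickening R S \ S))⁻¹ • volume.restrict (cthickening R S \ S)) :
    ∀ r, 0 ≤ r → r < R →
      (P {ω | infDist (X ω) S ≤ r}).toReal
        = ∫ t in (0:ℝ)..r,
            (L0 + 2 * M * t + 4 * π * t ^ 2)
              / (L0 * R + M * R ^ 2 + 4 / 3 * π * R ^ 3) := by
  intro r hr hrR
  have hR : 0 < R := hr.trans_lt hrR
  have hshell : ∀ t, 0 ≤ t → t ≤ R →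
      volume.real (cthickening t S \ S) = L0 * t + M * t ^ 2 + 4 / 3 * π * t ^ 3 := by
    intro t ht htR
    have hcth : volume.real (cthickening t S)
        = volume.real S + L0 * t + M * t ^ 2 + 4 / 3 * π * t ^ 3 := by
      rcases htR.lt_or_eq with htR | rfl
      · exact hvol t ht htR
      · exact measureReal_cthickening_of_forall_lt volume hS.isBounded hR
          (by fun_prop : Continuous _).continuousWithinAt hvol
    rw [measureReal_sdiff (self_subset_cthickening S) hS.isClosed.measurableSet
      hS.isBounded.cthickening.measure_lt_top.ne, hcth]
    ring
  have hevent : {ω | infDist (X ω) S ≤ r} = X ⁻¹' cthickening r S := by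
    ext ω
    exact (mem_cthickening_iff_infDist_le hSne hr).symm
  have hinter : cthickening r S ∩ (cthickening R S \ S) = cthickening r S \ S := by
    rw [← inter_sdiff_assoc, inter_eq_self_of_subset_left (cthickening_mono hrR.le S)]
  rw [integral_shell_density, ← hshell r hr hrR.le, ← hshell R hR.le le_rfl, ← hinter, hevent,
    ← measureReal_preimage_of_map_eq_uniform hX isClosed_cthickening.measurableSet hunif]
  rfl

/-- If S ⊆ ℝ³ is compact with polynomial parallel volume
V(r) = μ(S) + L₀r + Mr² + (4/3)πr³ for 0 ≤ r < R, then the distance D = dist(X,S)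
from a uniform point X on B(S,R) \ S has density
f(r) = (L₀ + 2Mr + 4πr²)/(L₀R + MR² + (4/3)πR³) on [0,R). -/
theorem stmt_9 (S : Set (EuclideanSpace ℝ (Fin 3)))
    (hS : IsCompact S) (hSne : S.Nonempty) (R L0 M : ℝ)
    (hR : 0 < R) (hL0 : 0 < L0) (hM : 0 ≤ M)
    (hvol : ∀ r : ℝ, 0 ≤ r → r < R →
      (volume (cthickening r S)).toReal
        = (volume S).toReal + L0 * r + M * r ^ 2 + 4 / 3 * π * r ^ 3)
    {Ω : Type*} [MeasurableSpace Ω] (P : Measure Ω) [IsProbabilityMeasure P]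
    (X : Ω → EuclideanSpace ℝ (Fin 3)) (hX : Measurable X)
    (hunif : Measure.map X P
      = (volume (cthickening R S \ S))⁻¹ • volume.restrict (cthickening R S \ S)) :
    ∀ r, 0 ≤ r → r < R →
      (P {ω | infDist (X ω) S ≤ r}).toReal
        = ∫ t in (0:ℝ)..r,
            (L0 + 2 * M * t + 4 * π * t ^ 2)
              / (L0 * R + M * R ^ 2 + 4 / 3 * π * R ^ 3) :=
  stmt_9_general S hS hSne R L0 M hvol P X hX hunif
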